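/- For a scalar linear system with the discontinuity issue of Manek–Kolter: let f : ℝ → ℝ be defined by f(x) = c - x·ReLU(x·c + α·|x|²)/x² for x ≠ 0 and f(0) = c with c ≠ 0, α > 0 (corresponding to g ≡ c, V(x) = x², ∇V(x) = 2x up to scaling). Then f is discontinuous at 0; specifically, lim_{x→0⁺} f(x) exists and differs from f(0) = c whenever c > 0. -/
import Mathlib


open Classical in
theorem stmt19 (c α : ℝ) (hc : 0 < c) (hα : 0 < α) (f : ℝ → ℝ)
    (hf : ∀ x : ℝ, f x = if x = 0 then c else
      c - x * max (x * c + α * |x| ^ 2) 0 / x ^ 2) :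
    ¬ ContinuousAt f 0 ∧
      ∃ L : ℝ, Filter.Tendsto f (nhdsWithin 0 (Set.Ioi 0)) (nhds L) ∧ L ≠ c := by
  have heq : ∀ x ∈ Set.Ioi (0:ℝ), f x = -α * x := by
    intro x hx
    have hx0 : (0:ℝ) < x := hx
    rw [hf x, if_neg hx0.ne']
    have habs : |x| = x := abs_of_pos hx0
    have hpos : 0 ≤ x * c + α * |x| ^ 2 := by
      rw [habs]; positivity
    rw [max_eq_left hpos, habs]
    field_simp
    ring
  have htend : Filter.Tendsto f (nhdsWithin 0 (Set.Ioi 0)) (nhds 0) := by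
    have h1 : Filter.Tendsto (fun x : ℝ => -α * x) (nhdsWithin 0 (Set.Ioi 0)) (nhds 0) := by
      have h0 : Continuous (fun x : ℝ => -α * x) := continuous_const.mul continuous_id
      have := h0.tendsto (0:ℝ)
      simpa using this.mono_left nhdsWithin_le_nhds
    exact h1.congr' (by filter_upwards [self_mem_nhdsWithin] with x hx using (heq x hx).symm)
  constructor
  · intro hcont
    have hf0 : f 0 = c := by rw [hf 0]; simp
    have h2 : Filter.Tendsto f (nhdsWithin 0 (Set.Ioi 0)) (nhds c) := by
      have := hcont.tendsto
      rw [hf0] at this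
      exact this.mono_left nhdsWithin_le_nhds
    have : (0:ℝ) = c := tendsto_nhds_unique htend h2
    exact hc.ne this
  · exact ⟨0, htend, hc.ne⟩
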